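/- Let α be a unit-speed C² plane curve on [0, L] that is closed and periodic in the sense that α(0) = α(L) and α'(0) = α'(L). Then the total curvature K = ∫₀^L κ(s) ds equals 2π·ω for some integer ω (the rotation index). -/

import Mathlib

/-!
Identify the plane with `ℂ` and view the unit tangent `t = α'` as a complex number. Since `|t| = 1`,
`t'` is orthogonal to `t`, so `t' = iκ t` with `κ = Im (conj t · t')` the signed curvature. Solving
this linear ODE gives `t L = t 0 · exp (i ∫₀ᴸ κ)`, and `t L = t 0 ≠ 0` forces `exp (iK) = 1`,
i.e. `K ∈ 2πℤ`.
-/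

open Real

open Complex ComplexConjugate

theorem inner_eq_zero_of_hasDerivAt_of_norm_eq {E : Type*} [NormedAddCommGroup E]
    [InnerProductSpace ℝ E] {f : ℝ → E} {f' : E} {c x : ℝ} (hf : HasDerivAt f f' x)
    (hc : ∀ y, ‖f y‖ = c) : inner ℝ (f x) f' = 0 := by
  have hconst : (‖f ·‖ ^ 2) = fun _ ↦ c ^ 2 := funext fun y ↦ by rw [hc]
  have h := hf.norm_sq
  rw [hconst] at h
  simpa using h.unique (hasDerivAt_const x _)

theorem Complex.eq_im_mul_I_mul_of_inner_eq_zero {z w : ℂ} (hz : ‖z‖ = 1)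
    (h : inner ℝ z w = 0) : w = (conj z * w).im * I * z := by
  have hre : (conj z * w).re = 0 := by rwa [Complex.inner, mul_comm] at h
  have hzz : conj z * z = 1 := by
    rw [mul_comm, mul_conj, normSq_eq_norm_sq, hz]
    norm_num
  calc w = conj z * w * z := by linear_combination (-w) * hzz
    _ = (conj z * w).im * I * z := by
      conv_lhs => rw [← re_add_im (conj z * w), hre]
      simp

theorem eq_mul_exp_integral_of_hasDerivAt {t f : ℝ → ℂ} (hf : Continuous f)
    (ht : ∀ s, HasDerivAt t (f s * t s) s) (a b : ℝ) :
    t b = t a * exp (∫ s in a..b, f s) := by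
  set F : ℝ → ℂ := fun u ↦ ∫ s in a..u, f s
  have hF : ∀ s, HasDerivAt F (f s) s := fun s ↦ (hf.integral_hasStrictDerivAt a s).hasDerivAt
  have hconst : ∀ s, HasDerivAt (fun u ↦ t u * exp (-F u)) 0 s := fun s ↦
    ((ht s).mul (hF s).neg.cexp).congr_deriv (by ring)
  have hab : t a * exp (-F a) = t b * exp (-F b) :=
    is_const_of_deriv_eq_zero (fun s ↦ (hconst s).differentiableAt)
      (fun s ↦ (hconst s).deriv) a b
  have hFa : F a = 0 := intervalIntegral.integral_same
  rw [hFa, neg_zero, Complex.exp_zero, mul_one] at hab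
  change t b = t a * exp (F b)
  rw [hab, mul_assoc, ← Complex.exp_add, neg_add_cancel, Complex.exp_zero, mul_one]

theorem exists_int_integral_eq_two_pi_mul {t : ℝ → ℂ} {κ : ℝ → ℝ} (hκ : Continuous κ)
    (ht : ∀ s, HasDerivAt t (κ s * I * t s) s) {a b : ℝ} (hab : t a = t b) (ha : t a ≠ 0) :
    ∃ ω : ℤ, ∫ s in a..b, κ s = 2 * π * ω := by
  have h := eq_mul_exp_integral_of_hasDerivAt (by fun_prop) ht a b
  rw [← hab, intervalIntegral.integral_mul_const, intervalIntegral.integral_ofReal] at h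
  obtain ⟨n, hn⟩ := exp_eq_one_iff.mp (mul_left_cancel₀ ha (h.symm.trans (mul_one _).symm))
  refine ⟨n, ?_⟩
  have him := congrArg im hn
  simp only [mul_im, ofReal_re, I_im, mul_one, ofReal_im, I_re, mul_zero, add_zero, intCast_re,
    mul_re, re_ofNat, im_ofNat, sub_zero, zero_mul, intCast_im, sub_self] at him
  linarith

theorem stmt6_general (α : ℝ → EuclideanSpace ℝ (Fin 2)) (κ : ℝ → ℝ) (L : ℝ)
    (hα : ContDiff ℝ 2 α)
    (hunit : ∀ s, ‖deriv α s‖ = 1)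
    (hclosed' : deriv α 0 = deriv α L)
    (hκ : ∀ s, κ s = deriv α s 0 * deriv (deriv α) s 1 - deriv α s 1 * deriv (deriv α) s 0) :
    ∃ ω : ℤ, ∫ s in (0:ℝ)..L, κ s = 2 * π * ω := by
  have hT : ContDiff ℝ 1 (deriv α) := (contDiff_succ_iff_deriv (n := 1).mp hα).2.2
  set e := Complex.orthonormalBasisOneI.repr.symm
  set t : ℝ → ℂ := fun s ↦ e (deriv α s)
  have ht : ∀ s, HasDerivAt t (e (deriv (deriv α) s)) s := fun s ↦
    e.hasFDerivAt.comp_hasDerivAt s ((hT.differentiable one_ne_zero) s).hasDerivAt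
  have ht_norm : ∀ s, ‖t s‖ = 1 := fun s ↦ by simp [t, hunit]
  have hκt : ∀ s, κ s = (conj (t s) * e (deriv (deriv α) s)).im := fun s ↦ by
    simp only [hκ, t, e, Complex.orthonormalBasisOneI_repr_symm_apply, map_add, map_mul,
      conj_ofReal, conj_I, mul_im, mul_re, add_re, add_im, neg_re, neg_im, ofReal_re, ofReal_im,
      I_re, I_im]
    ring
  have hκ_cont : Continuous κ := by
    have hT'_cont := hT.continuous_deriv le_rfl
    rw [funext hκt]
    fun_prop
  have hode : ∀ s, HasDerivAt t (κ s * I * t s) s := fun s ↦ by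
    rw [hκt, ← Complex.eq_im_mul_I_mul_of_inner_eq_zero (ht_norm s)
      (inner_eq_zero_of_hasDerivAt_of_norm_eq (ht s) ht_norm)]
    exact ht s
  exact exists_int_integral_eq_two_pi_mul hκ_cont hode (congrArg e hclosed')
    (norm_ne_zero_iff.mp (by simp [ht_norm]))

theorem stmt6 (α : ℝ → EuclideanSpace ℝ (Fin 2)) (κ : ℝ → ℝ) (L : ℝ)
    (hα : ContDiff ℝ 2 α)
    (hL : 0 ≤ L)
    (hunit : ∀ s, ‖deriv α s‖ = 1)
    (hclosed : α 0 = α L)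
    (hclosed' : deriv α 0 = deriv α L)
    (hκ : ∀ s, κ s = deriv α s 0 * deriv (deriv α) s 1 - deriv α s 1 * deriv (deriv α) s 0) :
    ∃ ω : ℤ, ∫ s in (0:ℝ)..L, κ s = 2 * π * ω :=
  stmt6_general α κ L hα hunit hclosed' hκ
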